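/- For every integer d ≥ 2 there is a constant c_d > 0 depending only on d such that for every integer n ≥ 2 and every integer k with 2 ≤ k ≤ n, the number of k-rich lines with respect to the cube lattice P = {1, 2, …, n}^d ⊂ ℝ^d is at least c_d·n^{2d}/k^{d+1} (that is, at least c_d·N²/k^{d+1} where N = n^d = |P|). -/

import Mathlib

/-- A straight line in `ℝ^d`, given as the set of points on an affine line. -/
def IsLine {d : ℕ} (l : Set (Fin d → ℝ)) : Prop :=
  ∃ p v : Fin d → ℝ, v ≠ 0 ∧ l = {x | ∃ t : ℝ, x = p + t • v}

/-- The cube lattice `{1, 2, …, n}^d ⊂ ℝ^d`. -/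
def cubeLattice (d n : ℕ) : Set (Fin d → ℝ) :=
  {x | ∀ i, ∃ m : ℕ, 1 ≤ m ∧ m ≤ n ∧ x i = m}

/-!
Put `m = ⌊n / 2k⌋` and `q = ⌊n / 2⌋`. For a primitive direction `w ∈ {1, …, m}^d` and a lattice
point `a` with `1 ≤ a₀ ≤ w₀` and `1 ≤ aᵢ ≤ q` for `i ≠ 0`, the line `a + ℝ w` contains the `k`
cube points `a, a + w, …, a + (k - 1) w`. These lines are pairwise distinct: a line determines its
primitive direction `w`, and its lattice points form the single progression `a + ℤ w`, which meets
the window `1 ≤ a₀ ≤ w₀` exactly once. This gives `q^(d-1) ∑ w₀` rich lines. At most a fraction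
`∑_{g ≥ 2} g⁻² ≤ 11/12` of `{1, …, m}^d` is non-primitive, so even after discarding the vectors
with `w₀ ≤ m / 24` we keep `≫ m^d` directions with `w₀ > m / 24`; hence `∑ w₀ ≫ m^(d+1)` and there
are `≫ q^(d-1) m^(d+1) ≫ n^(2d) / k^(d+1)` rich lines. When `2k > n`, the `n^(d-1)` axis-parallel
lines suffice.
-/

open Finset

def lineThrough (𝕜 : Type*) {V : Type*} [Ring 𝕜] [AddCommGroup V] [Module 𝕜 V] (p v : V) :
    Set V :=
  {x | ∃ t : 𝕜, x = p + t • v}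

section Lines

variable {𝕜 V : Type*} [AddCommGroup V]

theorem exists_eq_add_smul_of_lineThrough_eq [Ring 𝕜] [Module 𝕜 V] {p v p' v' : V}
    (h : lineThrough 𝕜 p v = lineThrough 𝕜 p' v') :
    (∃ s : 𝕜, p' = p + s • v) ∧ ∃ t : 𝕜, v' = t • v := by
  have hp' : p' ∈ lineThrough 𝕜 p v := h ▸ ⟨0, by simp⟩
  have hpv' : p' + v' ∈ lineThrough 𝕜 p v := h ▸ ⟨1, by simp⟩
  obtain ⟨s, hs⟩ := hp'
  obtain ⟨u, hu⟩ := hpv'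
  refine ⟨⟨s, hs⟩, u - s, ?_⟩
  rw [sub_smul, ← add_sub_cancel_left p' v', hu, hs]
  abel

theorem lineThrough_add_smul_smul [Field 𝕜] [Module 𝕜 V] (p v : V) (s : 𝕜) {c : 𝕜}
    (hc : c ≠ 0) :
    lineThrough 𝕜 (p + s • v) (c • v) = lineThrough 𝕜 p v := by
  ext x
  constructor
  · rintro ⟨t, rfl⟩
    exact ⟨s + t * c, by module⟩
  · rintro ⟨t, rfl⟩
    refine ⟨(t - s) / c, ?_⟩
    rw [smul_smul, div_mul_cancel₀ _ hc]
    module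

end Lines

theorem IsLine.eq_lineThrough {d : ℕ} {l : Set (Fin d → ℝ)} (hl : IsLine l)
    {p r : Fin d → ℝ} (hp : p ∈ l) (hr : r ∈ l) (hpr : p ≠ r) :
    l = lineThrough ℝ p (r - p) := by
  obtain ⟨p₀, v, -, rfl⟩ := hl
  obtain ⟨s, rfl⟩ := hp
  obtain ⟨u, rfl⟩ := hr
  have hsu : u - s ≠ 0 := sub_ne_zero.2 fun h => hpr (by rw [h])
  rw [show p₀ + u • v - (p₀ + s • v) = (u - s) • v by module,
    lineThrough_add_smul_smul _ _ _ hsu]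
  rfl

def richLines {d : ℕ} (P : Set (Fin d → ℝ)) (k : ℕ) : Set (Set (Fin d → ℝ)) :=
  {l | IsLine l ∧ k ≤ (P ∩ l).ncard}

theorem richLines_finite {d : ℕ} {P : Set (Fin d → ℝ)} (hP : P.Finite) {k : ℕ} (hk : 2 ≤ k) :
    (richLines P k).Finite := by
  refine ((hP.prod hP).image fun pr => lineThrough ℝ pr.1 (pr.2 - pr.1)).subset ?_
  rintro l ⟨hl, hkl⟩
  obtain ⟨p, hp, r, hr, hpr⟩ :=
    (Set.one_lt_ncard (hP.inter_of_left l)).1 (lt_of_lt_of_le (by omega) hkl)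
  exact ⟨(p, r), ⟨hp.1, hr.1⟩, (hl.eq_lineThrough hp.2 hr.2 hpr).symm⟩

theorem cubeLattice_finite (d n : ℕ) : (cubeLattice d n).Finite := by
  refine (Set.Finite.pi fun _ => (Set.finite_Icc 1 n).image (Nat.cast : ℕ → ℝ)).subset ?_
  intro x hx i _
  obtain ⟨m, h1, h2, hm⟩ := hx i
  exact ⟨m, ⟨h1, h2⟩, hm.symm⟩

section Primitive

variable {ι : Type*} [Fintype ι]

def IsPrimitive (w : ι → ℕ) : Prop :=
  univ.gcd w = 1

instance : DecidablePred (IsPrimitive (ι := ι)) :=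
  fun w => inferInstanceAs (Decidable (univ.gcd w = 1))

theorem IsPrimitive.eq_one_of_forall_dvd {w : ι → ℕ} (hw : IsPrimitive w) {g : ℕ}
    (hg : ∀ i, g ∣ w i) : g = 1 :=
  Nat.dvd_one.1 (hw ▸ Finset.dvd_gcd fun i _ => hg i)

theorem IsPrimitive.exists_sum_mul_eq_one {w : ι → ℕ} (hw : IsPrimitive w) :
    ∃ c : ι → ℤ, ∑ i, (w i : ℤ) * c i = 1 := by
  obtain ⟨c, hc⟩ := Finset.gcd_eq_sum_mul univ fun i => (w i : ℤ)
  refine ⟨c, ?_⟩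
  have hG : (univ.gcd fun i => (w i : ℤ)).toNat = 1 := hw.eq_one_of_forall_dvd fun i => by
    rw [← Int.natCast_dvd_natCast, Int.toNat_of_nonneg Int.finsetGcd_nonneg]
    exact Finset.gcd_dvd (mem_univ i)
  rw [← hc, ← Int.toNat_of_nonneg Int.finsetGcd_nonneg, hG, Nat.cast_one]

theorem IsPrimitive.exists_intCast_eq {w : ι → ℕ} (hw : IsPrimitive w) {z : ι → ℤ} {s : ℝ}
    (h : ∀ i, (z i : ℝ) = s * w i) : ∃ j : ℤ, s = j := by
  obtain ⟨c, hc⟩ := hw.exists_sum_mul_eq_one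
  refine ⟨∑ i, z i * c i, ?_⟩
  have hc' : ∑ i, (w i : ℝ) * c i = 1 := by exact_mod_cast hc
  push_cast
  simp_rw [h, mul_assoc, ← Finset.mul_sum, hc', mul_one]

theorem isPrimitive_pi_single [DecidableEq ι] (i : ι) : IsPrimitive (Pi.single i 1 : ι → ℕ) :=
  Nat.dvd_one.1 (by simpa using Finset.gcd_dvd (f := (Pi.single i 1 : ι → ℕ)) (mem_univ i))

end Primitive

section LatticeLines

variable {ι : Type*}

def latticeLine (a w : ι → ℕ) : Set (ι → ℝ) :=
  lineThrough ℝ (Nat.cast ∘ a) (Nat.cast ∘ w)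

variable [Fintype ι]

theorem IsPrimitive.eq_of_natCast_eq_smul {w w' : ι → ℕ} (hw : IsPrimitive w)
    (hw' : IsPrimitive w') {i : ι} (hi : w' i ≠ 0) {t : ℝ}
    (h : (Nat.cast ∘ w' : ι → ℝ) = t • Nat.cast ∘ w) : w = w' := by
  have ht : ∀ l, (w' l : ℝ) = t * w l := fun l => by simpa using congrFun h l
  obtain ⟨j, rfl⟩ := hw.exists_intCast_eq ht
  have hw'j : ∀ l, (w' l : ℤ) = j * w l := fun l => by exact_mod_cast ht l
  have hj0 : 0 ≤ j := by nlinarith [hw'j i, Nat.pos_of_ne_zero hi]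
  have hj : j.toNat = 1 := hw'.eq_one_of_forall_dvd fun l => ⟨w l, by
    rw [← Int.natCast_inj, hw'j l]; push_cast [Int.toNat_of_nonneg hj0]; rfl⟩
  funext l
  have := hw'j l
  rw [← Int.toNat_of_nonneg hj0, hj, Nat.cast_one, one_mul] at this
  exact_mod_cast this.symm

theorem IsPrimitive.eq_of_natCast_eq_add_smul {w a a' : ι → ℕ} (hw : IsPrimitive w) {i : ι}
    (ha : a i ∈ Icc 1 (w i)) (ha' : a' i ∈ Icc 1 (w i)) {s : ℝ}
    (h : (Nat.cast ∘ a' : ι → ℝ) = Nat.cast ∘ a + s • Nat.cast ∘ w) : a = a' := by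
  have hs : ∀ l, (a' l : ℝ) = a l + s * w l := fun l => by simpa using congrFun h l
  obtain ⟨z, rfl⟩ := hw.exists_intCast_eq (z := fun l => a' l - a l) fun l => by
    push_cast
    linarith [hs l]
  have hz : ∀ l, (a' l : ℤ) = a l + z * w l := fun l => by exact_mod_cast hs l
  have hz0 : z = 0 := by
    rw [Finset.mem_Icc] at ha ha'
    have := hz i
    rcases lt_trichotomy z 0 with hneg | hzero | hpos
    · nlinarith
    · exact hzero
    · nlinarith
  funext l
  simpa [hz0] using (hz l).symm

theorem eq_and_eq_of_latticeLine_eq {a w a' w' : ι → ℕ} {i : ι}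
    (hw : IsPrimitive w) (hw' : IsPrimitive w')
    (ha : a i ∈ Icc 1 (w i)) (ha' : a' i ∈ Icc 1 (w' i))
    (h : latticeLine a w = latticeLine a' w') :
    w = w' ∧ a = a' := by
  obtain ⟨⟨s, hs⟩, t, ht⟩ := exists_eq_add_smul_of_lineThrough_eq h
  have hw'i : w' i ≠ 0 := by rw [Finset.mem_Icc] at ha'; omega
  obtain rfl := hw.eq_of_natCast_eq_smul hw' hw'i ht
  exact ⟨rfl, hw.eq_of_natCast_eq_add_smul ha ha' hs⟩

end LatticeLines

theorem Fintype.card_piFinset_update_const {ι κ : Type*} [Fintype ι] [DecidableEq ι]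
    (s t : Finset κ) (i : ι) :
    #(Fintype.piFinset (Function.update (fun _ => s) i t)) = #t * #s ^ (Fintype.card ι - 1) := by
  rw [Fintype.card_piFinset]
  simp_rw [Function.apply_update (fun _ => Finset.card)]
  rw [prod_update_of_mem (mem_univ i), prod_const, card_sdiff_of_subset (by simp), card_singleton,
    card_univ]

section RichLatticeLines

variable {d n k : ℕ}

theorem isLine_latticeLine {a w : Fin d → ℕ} (hw : w ≠ 0) : IsLine (latticeLine a w) :=
  ⟨_, _, fun h => hw (funext fun i => by simpa using congrFun h i), rfl⟩

theorem le_ncard_cubeLattice_inter_latticeLine {a w : Fin d → ℕ} (hw : w ≠ 0)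
    (ha : ∀ i, 1 ≤ a i) (hn : ∀ i, a i + (k - 1) * w i ≤ n) :
    k ≤ (cubeLattice d n ∩ latticeLine a w).ncard := by
  obtain ⟨i, hi⟩ := Function.ne_iff.1 hw
  refine Set.le_ncard_of_inj_on_range (fun j => Nat.cast ∘ (a + j • w)) (fun j hj => ⟨?_, ?_⟩)
    (fun j _ j' _ h => ?_) ((cubeLattice_finite d n).inter_of_left _)
  · intro l
    refine ⟨a l + j * w l, le_add_right (ha l), ?_, by simp⟩
    nlinarith [hn l, Nat.le_sub_one_of_lt hj]
  · exact ⟨j, funext fun l => by simp⟩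
  · have := congrFun h i
    simp only [Function.comp_apply, Pi.add_apply, Pi.smul_apply, smul_eq_mul, Nat.cast_inj,
      Nat.add_left_cancel_iff] at this
    exact Nat.eq_of_mul_eq_mul_right (Nat.pos_of_ne_zero hi) this

variable [NeZero d]

def startBox (q : ℕ) (w : Fin d → ℕ) : Finset (Fin d → ℕ) :=
  Fintype.piFinset (Function.update (fun _ => Icc 1 q) 0 (Icc 1 (w 0)))

theorem mem_startBox {q : ℕ} {w a : Fin d → ℕ} :
    a ∈ startBox q w ↔ a 0 ∈ Icc 1 (w 0) ∧ ∀ i ≠ 0, a i ∈ Icc 1 q := by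
  simp only [startBox, Fintype.mem_piFinset]
  refine ⟨fun h => ⟨by simpa using h 0, fun i hi => by simpa [hi] using h i⟩, fun h i => ?_⟩
  rcases eq_or_ne i 0 with rfl | hi
  · simpa using h.1
  · simpa [hi] using h.2 i hi

theorem card_startBox (q : ℕ) (w : Fin d → ℕ) : #(startBox q w) = w 0 * q ^ (d - 1) := by
  rw [startBox, Fintype.card_piFinset_update_const, Nat.card_Icc, Nat.card_Icc, Fintype.card_fin,
    Nat.add_sub_cancel, Nat.add_sub_cancel]

theorem latticeLine_mem_richLines {q : ℕ} {w a : Fin d → ℕ} (hk : 1 ≤ k) (hkw : k * w 0 ≤ n)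
    (hq : ∀ i ≠ 0, q + (k - 1) * w i ≤ n) (ha : a ∈ startBox q w) :
    latticeLine a w ∈ richLines (cubeLattice d n) k := by
  rw [mem_startBox, Finset.mem_Icc] at ha
  obtain ⟨ha0, ha⟩ := ha
  have hw : w ≠ 0 := fun h => by simp [h] at ha0; omega
  refine ⟨isLine_latticeLine hw, le_ncard_cubeLattice_inter_latticeLine hw (fun i => ?_)
    (fun i => ?_)⟩
  · rcases eq_or_ne i 0 with rfl | hi
    · exact ha0.1
    · exact (Finset.mem_Icc.1 (ha i hi)).1
  · rcases eq_or_ne i 0 with rfl | hi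
    · have : (k - 1) * w 0 + w 0 = k * w 0 := by
        rw [← Nat.succ_mul, Nat.succ_eq_add_one, Nat.sub_add_cancel hk]
      omega
    · linarith [(Finset.mem_Icc.1 (ha i hi)).2, hq i hi]

theorem sum_mul_pow_le_ncard_richLines {q : ℕ} (hk : 2 ≤ k) (W : Finset (Fin d → ℕ))
    (hW : ∀ w ∈ W, IsPrimitive w ∧ k * w 0 ≤ n ∧ ∀ i ≠ 0, q + (k - 1) * w i ≤ n) :
    (∑ w ∈ W, w 0) * q ^ (d - 1) ≤ (richLines (cubeLattice d n) k).ncard := by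
  let line (x : Σ _ : Fin d → ℕ, Fin d → ℕ) := latticeLine x.2 x.1
  have hcard : #(W.sigma (startBox q)) = (∑ w ∈ W, w 0) * q ^ (d - 1) := by
    simp only [card_sigma, card_startBox, sum_mul]
  have hrich : ∀ x ∈ W.sigma (startBox q), line x ∈ richLines (cubeLattice d n) k := by
    rintro ⟨w, a⟩ hx
    rw [mem_sigma] at hx
    obtain ⟨-, hkw, hq⟩ := hW w hx.1
    exact latticeLine_mem_richLines (by omega) hkw hq hx.2
  have hinj : Set.InjOn line ↑(W.sigma (startBox q)) := by
    rintro ⟨w, a⟩ hx ⟨w', a'⟩ hx' h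
    rw [mem_coe, mem_sigma, mem_startBox] at hx hx'
    obtain ⟨rfl, rfl⟩ :=
      eq_and_eq_of_latticeLine_eq (hW w hx.1).1 (hW w' hx'.1).1 hx.2.1 hx'.2.1 h
    rfl
  rw [← hcard, ← Set.ncard_coe_finset]
  exact Set.ncard_le_ncard_of_injOn line hrich hinj (richLines_finite (cubeLattice_finite d n) hk)

end RichLatticeLines

section PrimitiveCount

variable {d : ℕ}

theorem sum_Icc_two_inv_sq_le (m : ℕ) : ∑ g ∈ Icc 2 m, ((g : ℝ) ^ 2)⁻¹ ≤ 11 / 12 := by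
  have htail := sum_Ioo_inv_sq_le (α := ℝ) 2 (m + 1)
  calc ∑ g ∈ Icc 2 m, ((g : ℝ) ^ 2)⁻¹ ≤ ∑ g ∈ insert 2 (Ioo 2 (m + 1)), ((g : ℝ) ^ 2)⁻¹ :=
        sum_le_sum_of_subset_of_nonneg (fun g hg => by simp at hg ⊢; omega)
          (fun _ _ _ => by positivity)
    _ ≤ 11 / 12 := by
        rw [sum_insert (by simp)]
        norm_num at htail ⊢
        linarith

theorem card_piFinset_filter_dvd (m g : ℕ) :
    #(Fintype.piFinset fun _ : Fin d => {x ∈ Icc 1 m | g ∣ x}) = (m / g) ^ d := by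
  have hIcc : Icc 1 m = Ioc 0 m := Icc_add_one_left_eq_Ioc 0 m
  rw [Fintype.card_piFinset, prod_const, card_univ, Fintype.card_fin, hIcc,
    Nat.Ioc_filter_dvd_card_eq_div]

theorem card_filter_not_isPrimitive_le (hd : 2 ≤ d) (m : ℕ) :
    12 * #{w ∈ Fintype.piFinset (fun _ : Fin d => Icc 1 m) | ¬IsPrimitive w} ≤ 11 * m ^ d := by
  have hsub : {w ∈ Fintype.piFinset (fun _ : Fin d => Icc 1 m) | ¬IsPrimitive w} ⊆
      (Icc 2 m).biUnion fun g => Fintype.piFinset fun _ => {x ∈ Icc 1 m | g ∣ x} := by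
    intro w hw
    simp only [mem_filter, Fintype.mem_piFinset, Finset.mem_Icc] at hw
    obtain ⟨hwm, hg1⟩ := hw
    have hw0 := hwm ⟨0, by omega⟩
    have hg : ∀ i, univ.gcd w ∣ w i := fun i => Finset.gcd_dvd (mem_univ i)
    have hgw : univ.gcd w ≤ m := (Nat.le_of_dvd hw0.1 (hg _)).trans hw0.2
    have hg0 : univ.gcd w ≠ 0 := fun h => by
      simp [Finset.gcd_eq_zero_iff.1 h _ (mem_univ ⟨0, by omega⟩)] at hw0
    simp only [mem_biUnion, Fintype.mem_piFinset, mem_filter, Finset.mem_Icc]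
    exact ⟨univ.gcd w, ⟨by unfold IsPrimitive at hg1; omega, hgw⟩, fun i => ⟨hwm i, hg i⟩⟩
  have hcount : ∀ g ∈ Icc 2 m,
      ((m / g : ℕ) : ℝ) ^ d ≤ m ^ d * ((g : ℝ) ^ 2)⁻¹ := by
    intro g hg
    have hg1 : (1 : ℝ) ≤ g := by simp at hg; exact_mod_cast (by omega : 1 ≤ g)
    rw [← div_eq_mul_inv, le_div_iff₀ (by positivity)]
    calc ((m / g : ℕ) : ℝ) ^ d * (g : ℝ) ^ 2 ≤ ((m / g : ℕ) : ℝ) ^ d * (g : ℝ) ^ d := by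
          gcongr
      _ = (((m / g * g : ℕ)) : ℝ) ^ d := by push_cast; ring
      _ ≤ (m : ℝ) ^ d := by gcongr; exact Nat.div_mul_le_self m g
  have hreal : (#{w ∈ Fintype.piFinset (fun _ : Fin d => Icc 1 m) | ¬IsPrimitive w} : ℝ) ≤
      m ^ d * (11 / 12) := by
    calc _ ≤ ((∑ g ∈ Icc 2 m, (m / g) ^ d : ℕ) : ℝ) := by
          exact_mod_cast (card_le_card hsub).trans (card_biUnion_le.trans_eq
            (sum_congr rfl fun g _ => card_piFinset_filter_dvd m g))
      _ ≤ ∑ g ∈ Icc 2 m, (m : ℝ) ^ d * ((g : ℝ) ^ 2)⁻¹ := by push_cast; exact sum_le_sum hcount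
      _ ≤ m ^ d * (11 / 12) := by
          rw [← mul_sum]
          exact mul_le_mul_of_nonneg_left (sum_Icc_two_inv_sq_le m) (by positivity)
  have : (12 * #{w ∈ Fintype.piFinset (fun _ : Fin d => Icc 1 m) | ¬IsPrimitive w} : ℝ) ≤
      11 * m ^ d := by linarith
  exact_mod_cast this

theorem pow_succ_le_sum_filter_isPrimitive [NeZero d] (hd : 2 ≤ d) (m : ℕ) :
    m ^ (d + 1) ≤ 576 * ∑ w ∈ Fintype.piFinset (fun _ : Fin d => Icc 1 m) with
      IsPrimitive w ∧ m < 24 * w 0, w 0 := by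
  set box := Fintype.piFinset fun _ : Fin d => Icc 1 m
  set W := {w ∈ box | IsPrimitive w ∧ m < 24 * w 0}
  have hbox : #box = m ^ d := by simp [box]
  have hsmall : 24 * #{w ∈ box | w 0 ∈ Icc 1 (m / 24)} ≤ m ^ d := by
    rw [← Fintype.piFinset_update_eq_filter_piFinset_mem _ _ (Icc_subset_Icc_right (by omega)),
      Fintype.card_piFinset_update_const, Nat.card_Icc, Nat.card_Icc, Fintype.card_fin,
      Nat.add_sub_cancel, Nat.add_sub_cancel, ← mul_assoc, ← pow_sub_one_mul (by omega : d ≠ 0)]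
    rw [mul_comm (m ^ _)]
    exact Nat.mul_le_mul_right _ (Nat.mul_div_le m 24)
  have hcover : box ⊆ {w ∈ box | ¬IsPrimitive w} ∪ {w ∈ box | w 0 ∈ Icc 1 (m / 24)} ∪ W := by
    intro w hw
    have hw0 := Fintype.mem_piFinset.1 hw 0
    simp only [mem_union, mem_filter, Finset.mem_Icc, W] at hw0 ⊢
    by_cases hp : IsPrimitive w
    · by_cases hm : m < 24 * w 0
      · exact .inr ⟨hw, hp, hm⟩
      · exact .inl (.inr ⟨hw, hw0.1, by omega⟩)
    · exact .inl (.inl ⟨hw, hp⟩)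
  have hW : m ^ d ≤ 24 * #W := by
    have := (card_le_card hcover).trans
      ((card_union_le _ _).trans (Nat.add_le_add_right (card_union_le _ _) _))
    have : 12 * #{w ∈ box | ¬IsPrimitive w} ≤ 11 * m ^ d := card_filter_not_isPrimitive_le hd m
    omega
  have hsum : m * #W ≤ 24 * ∑ w ∈ W, w 0 := by
    rw [mul_sum, mul_comm, ← smul_eq_mul]
    exact card_nsmul_le_sum _ _ _ fun w hw => (mem_filter.1 hw).2.2.le
  calc m ^ (d + 1) = m * m ^ d := by ring
    _ ≤ m * (24 * #W) := Nat.mul_le_mul_left _ hW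
    _ ≤ 576 * ∑ w ∈ W, w 0 := by linarith

end PrimitiveCount

section Counting

variable {d n k : ℕ} [NeZero d]

theorem pow_le_ncard_richLines_of_two_mul_le (hd : 2 ≤ d) (hk : 2 ≤ k) (hkn : 2 * k ≤ n) :
    n ^ (2 * d) ≤ 576 * 16 ^ d * k ^ (d + 1) * (richLines (cubeLattice d n) k).ncard := by
  set m := n / (2 * k)
  set q := n / 2
  have hm : 1 ≤ m := (Nat.le_div_iff_mul_le (by omega)).2 (by omega)
  have hkm : 2 * k * m ≤ n := Nat.mul_div_le n (2 * k)
  have hq : 2 * q ≤ n := Nat.mul_div_le n 2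
  have hn4km : n ≤ 4 * k * m := by
    have : n < 2 * k * (m + 1) := Nat.lt_mul_div_succ n (by omega)
    have : k ≤ k * m := Nat.le_mul_of_pos_right k hm
    linarith
  have hn4q : n ≤ 4 * q := by omega
  set W := {w ∈ Fintype.piFinset (fun _ : Fin d => Icc 1 m) | IsPrimitive w ∧ m < 24 * w 0}
  have hW : ∀ w ∈ W, IsPrimitive w ∧ k * w 0 ≤ n ∧ ∀ i ≠ 0, q + (k - 1) * w i ≤ n := by
    intro w hw
    simp only [W, mem_filter, Fintype.mem_piFinset, Finset.mem_Icc] at hw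
    obtain ⟨hwm, hp, -⟩ := hw
    have hkw : ∀ i, k * w i ≤ k * m := fun i => Nat.mul_le_mul_left k (hwm i).2
    refine ⟨hp, by linarith [hkw 0], fun i _ => ?_⟩
    have := Nat.mul_le_mul_right (w i) (Nat.sub_le k 1)
    linarith [hkw i]
  have hlines := sum_mul_pow_le_ncard_richLines hk W hW
  have hprim : m ^ (d + 1) ≤ 576 * ∑ w ∈ W, w 0 := pow_succ_le_sum_filter_isPrimitive hd m
  calc n ^ (2 * d) = n ^ (d + 1) * n ^ (d - 1) := by rw [← pow_add]; congr 1; omega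
    _ ≤ (4 * k * m) ^ (d + 1) * (4 * q) ^ (d - 1) := by gcongr
    _ = 4 ^ (d + 1 + (d - 1)) * k ^ (d + 1) * (m ^ (d + 1) * q ^ (d - 1)) := by ring
    _ = 16 ^ d * k ^ (d + 1) * (m ^ (d + 1) * q ^ (d - 1)) := by
        rw [show d + 1 + (d - 1) = 2 * d by omega, pow_mul]; norm_num
    _ ≤ 16 ^ d * k ^ (d + 1) * (576 * (∑ w ∈ W, w 0) * q ^ (d - 1)) := by gcongr
    _ = 576 * 16 ^ d * k ^ (d + 1) * ((∑ w ∈ W, w 0) * q ^ (d - 1)) := by ring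
    _ ≤ 576 * 16 ^ d * k ^ (d + 1) * (richLines (cubeLattice d n) k).ncard := by gcongr

theorem pow_le_ncard_richLines_of_lt_two_mul (hk : 2 ≤ k) (hkn : k ≤ n) (hnk : n < 2 * k) :
    n ^ (2 * d) ≤ 576 * 16 ^ d * k ^ (d + 1) * (richLines (cubeLattice d n) k).ncard := by
  have hW : ∀ w ∈ ({Pi.single 0 1} : Finset (Fin d → ℕ)),
      IsPrimitive w ∧ k * w 0 ≤ n ∧ ∀ i ≠ 0, n + (k - 1) * w i ≤ n := by
    simp only [mem_singleton, forall_eq, Pi.single_eq_same, mul_one]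
    exact ⟨isPrimitive_pi_single 0, hkn, fun i hi => by simp [Pi.single_eq_of_ne hi]⟩
  have hlines := sum_mul_pow_le_ncard_richLines hk _ hW
  rw [sum_singleton, Pi.single_eq_same, one_mul] at hlines
  have hd := NeZero.pos d
  have h16 : 2 * 2 ^ d ≤ 576 * 16 ^ d :=
    Nat.mul_le_mul (by norm_num) (Nat.pow_le_pow_left (by norm_num) d)
  calc n ^ (2 * d) = n ^ (d + 1) * n ^ (d - 1) := by rw [← pow_add]; congr 1; omega
    _ ≤ (2 * k) ^ (d + 1) * n ^ (d - 1) := by gcongr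
    _ = 2 * 2 ^ d * k ^ (d + 1) * n ^ (d - 1) := by ring
    _ ≤ 576 * 16 ^ d * k ^ (d + 1) * (richLines (cubeLattice d n) k).ncard :=
        Nat.mul_le_mul (Nat.mul_le_mul_right _ h16) hlines

end Counting

/-- For every `d ≥ 2` there is a constant `c_d > 0` such that for every `n ≥ 2` and
`2 ≤ k ≤ n`, the number of `k`-rich lines with respect to the cube lattice
`{1, …, n}^d ⊂ ℝ^d` is at least `c_d * n^(2d) / k^(d+1)`. -/
theorem cube_lattice_rich_lines_lower_bound_dim (d : ℕ) (hd : 2 ≤ d) :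
    ∃ c : ℝ, 0 < c ∧
      ∀ n k : ℕ, 2 ≤ n → 2 ≤ k → k ≤ n →
        c * (n : ℝ) ^ (2 * d) / (k : ℝ) ^ (d + 1) ≤
          ((Set.ncard {l : Set (Fin d → ℝ) |
              IsLine l ∧ k ≤ Set.ncard (cubeLattice d n ∩ l)}) : ℝ) := by
  have : NeZero d := ⟨by omega⟩
  refine ⟨(576 * 16 ^ d : ℝ)⁻¹, by positivity, fun n k _ hk hkn => ?_⟩
  have key : n ^ (2 * d) ≤ 576 * 16 ^ d * k ^ (d + 1) * (richLines (cubeLattice d n) k).ncard := by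
    rcases le_or_gt (2 * k) n with hnk | hnk
    · exact pow_le_ncard_richLines_of_two_mul_le hd hk hnk
    · exact pow_le_ncard_richLines_of_lt_two_mul hk hkn hnk
  rw [div_le_iff₀ (by positivity), inv_mul_le_iff₀ (by positivity)]
  exact_mod_cast (key.trans_eq (by ring) :
    n ^ (2 * d) ≤ 576 * 16 ^ d * ((richLines (cubeLattice d n) k).ncard * k ^ (d + 1)))
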